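/- If F is a fiber of type II* of a rational elliptic surface arising from a Halphen pencil of index m, then the largest multiplicity M_B of a component of the corresponding plane curve B satisfies M_B ≥ 3. -/

import Mathlib

/-- Dual graph of a Kodaira fiber of type `II*`: the affine Dynkin diagram `Ẽ₈`,
a chain `0 — 1 — ⋯ — 7` with an extra vertex `8` attached to vertex `5`. -/
def e8Graph : SimpleGraph (Fin 9) :=
  SimpleGraph.fromRel (fun i j => (j.val = i.val + 1 ∧ j.val ≤ 7) ∨ (i.val = 5 ∧ j.val = 8))

/-- Component multiplicities of a fiber of type `II*`. -/
def e8Mult : Fin 9 → ℕ := ![1, 2, 3, 4, 5, 6, 4, 2, 3]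

/-- Dual graph of a Kodaira fiber of type `III*`: the affine Dynkin diagram `Ẽ₇`,
a chain `0 — 1 — ⋯ — 6` with an extra vertex `7` attached to the middle vertex `3`. -/
def e7Graph : SimpleGraph (Fin 8) :=
  SimpleGraph.fromRel (fun i j => (j.val = i.val + 1 ∧ j.val ≤ 6) ∨ (i.val = 3 ∧ j.val = 7))

/-- Component multiplicities of a fiber of type `III*`. -/
def e7Mult : Fin 8 → ℕ := ![1, 2, 3, 4, 3, 2, 1, 2]

/-- Dual graph of a Kodaira fiber of type `IV*`: the affine Dynkin diagram `Ẽ₆`,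
a central vertex `0` with three arms `0 — 1 — 2`, `0 — 3 — 4`, `0 — 5 — 6`. -/
def e6Graph : SimpleGraph (Fin 7) :=
  SimpleGraph.fromRel (fun i j =>
    (i.val = 0 ∧ j.val = 1) ∨ (i.val = 1 ∧ j.val = 2) ∨
    (i.val = 0 ∧ j.val = 3) ∨ (i.val = 3 ∧ j.val = 4) ∨
    (i.val = 0 ∧ j.val = 5) ∨ (i.val = 5 ∧ j.val = 6))

/-- Component multiplicities of a fiber of type `IV*`. -/
def e6Mult : Fin 7 → ℕ := ![3, 2, 1, 2, 1, 2, 1]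

/-! Each vertex of multiplicity at least three must be an exceptional component, but the
branch vertex of `Ẽ₈` (multiplicity 6) and its three neighbours (multiplicities 5, 4, 3) all have
multiplicity at least three, so the branch vertex would be an exceptional node with three
exceptional neighbours. -/

theorem SimpleGraph.not_claw_of_ncard_adj_le_two {V : Type*} [Finite V] {G : SimpleGraph V}
    {P : V → Prop} (hP : ∀ v, P v → {u | P u ∧ G.Adj v u}.ncard ≤ 2) {v a b c : V}
    (ha : G.Adj v a) (hb : G.Adj v b) (hc : G.Adj v c) (hab : a ≠ b) (hac : a ≠ c)
    (hbc : b ≠ c) : ¬ (P v ∧ P a ∧ P b ∧ P c) := by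
  rintro ⟨hPv, hPa, hPb, hPc⟩
  have hthree : 2 < {u | P u ∧ G.Adj v u}.ncard :=
    (Set.two_lt_ncard_iff).mpr ⟨a, b, c, ⟨hPa, ha⟩, ⟨hPb, hb⟩, ⟨hPc, hc⟩, hab, hac, hbc⟩
  exact (hP v hPv).not_gt hthree

theorem e8Graph_adj_five : e8Graph.Adj 5 4 ∧ e8Graph.Adj 5 6 ∧ e8Graph.Adj 5 8 := by
  simp [e8Graph]

/-- Proposition (mult3): if the fiber `F` is of type `II*` (weighted dual graph `Ẽ₈`),
then — the exceptional (black) components lying in disjoint chains, so every black node has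
at most two black neighbors — the largest multiplicity `M_B` of a component of the
corresponding plane curve `B` is at least three: some blue component has multiplicity ≥ 3. -/
theorem curve_multiplicity_at_least_three_for_iistar
    {V : Type*} (G : SimpleGraph V) (mult : V → ℕ) (blue : V → Prop)
    (hblack : ∀ v, ¬ blue v → {u | ¬ blue u ∧ G.Adj v u}.ncard ≤ 2)
    (htype : ∃ e : G ≃g e8Graph, ∀ v, mult v = e8Mult (e v)) :
    ∃ v, blue v ∧ 3 ≤ mult v := by
  obtain ⟨e, hmult⟩ := htype
  have : Finite V := .of_equiv _ e.toEquiv.symm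
  by_contra! hsmall
  have hexc (i : Fin 9) (hi : 3 ≤ e8Mult i) : ¬ blue (e.symm i) := fun hblue =>
    (hsmall _ hblue).not_ge (by rwa [hmult, e.apply_symm_apply])
  have hadj (i j : Fin 9) (hij : e8Graph.Adj i j) : G.Adj (e.symm i) (e.symm j) :=
    e.symm.map_adj_iff.mpr hij
  obtain ⟨h54, h56, h58⟩ := e8Graph_adj_five
  exact SimpleGraph.not_claw_of_ncard_adj_le_two hblack (hadj _ _ h54) (hadj _ _ h56)
    (hadj _ _ h58) (by simp) (by simp) (by simp)
    ⟨hexc 5 (by decide), hexc 4 (by decide), hexc 6 (by decide), hexc 8 (by decide)⟩
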